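/- arXiv:2301.03468 — 2 statements merged into one kernel-verified Lean document; each statement's English description precedes it below -/
import Mathlib

section
/- (Sufficiency direction of the knapsack-to-DAP reduction, from the proof of Theorem 1.) Assume every user's budget exceeds every selling cost: c i ≤ b j for all i ∈ Fin G and j ∈ Fin J. Let x : Fin G → ℕ satisfy ∑_{i} x i = J, ∑_{i} z i * x i ≤ Z, and ∑_{i} c i * x i ≥ L + ∑_{i} d i. Then there exists an allocation V : Fin G → Fin J → ℕ with V i j ∈ {0,1}, such that: for every j, ∑_{i} V i j = 1; for every i, ∑_{j} V i j = x i; the size constraint ∑_{i} z i * (∑_{j} V i j) ≤ Z holds; the affordability constraint (V i j = 1 → c i ≤ b j) holds; and the profit satisfies ∑_{i} (c i * (∑_{j} V i j) − d i) ≥ L. -/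
/-!
A knapsack solution `x` with `∑ i, x i = J` is a way of handing out exactly one item to each of
the `J` users, item `i` going to `x i` of them. Enumerating the `J` pairs `(i, k)` with `k < x i`
gives such a hand-out `f : Fin J → Fin G`, and its 0/1 incidence matrix is the allocation. Its row
sums are `x i`, so size and profit are the knapsack weight and value (minus `∑ i, d i`), and every
user can afford every item since the budgets dominate all selling costs.
-/

open Finset

theorem exists_fun_card_fiber_eq {ι κ : Type*} [DecidableEq ι] [Fintype ι] [Fintype κ]
    (x : ι → ℕ) (hx : ∑ i, x i = Fintype.card κ) :
    ∃ f : κ → ι, ∀ i, #{j | f j = i} = x i := by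
  let e : (Σ i, Fin (x i)) ≃ κ := Fintype.equivOfCardEq (by simp [hx])
  refine ⟨fun j => (e.symm j).1, fun i => ?_⟩
  rw [← Fintype.card_subtype,
    ← Fintype.card_congr (e.subtypeEquiv (p := fun s => s.1 = i) (by simp)),
    Fintype.card_congr (Equiv.sigmaSubtype i), Fintype.card_fin]

def incidenceMatrix {ι κ : Type*} [DecidableEq ι] (f : κ → ι) (i : ι) (j : κ) : ℕ :=
  if f j = i then 1 else 0

namespace incidenceMatrix

variable {ι κ : Type*} [DecidableEq ι] (f : κ → ι)

theorem eq_zero_or_eq_one (i : ι) (j : κ) :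
    incidenceMatrix f i j = 0 ∨ incidenceMatrix f i j = 1 := by
  unfold incidenceMatrix
  split_ifs <;> simp

theorem sum_col [Fintype ι] (j : κ) : ∑ i, incidenceMatrix f i j = 1 := by
  simp [incidenceMatrix]

theorem sum_row [Fintype κ] (i : ι) : ∑ j, incidenceMatrix f i j = #{j | f j = i} := by
  simp [incidenceMatrix, sum_boole]

end incidenceMatrix

/-- Sufficiency direction of the knapsack-to-DAP reduction (proof of
Theorem 1): under large budgets, a knapsack solution `x` with `∑ i, x i = J`,
weight at most `Z`, and value at least `L + ∑ i, d i` yields a feasible DAP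
allocation with profit at least `L`. -/
theorem knapsack_to_dap_sufficiency
    (G J : ℕ) (c z d : Fin G → ℝ) (Z L : ℝ) (b : Fin J → ℝ)
    (hbudget : ∀ (i : Fin G) (j : Fin J), c i ≤ b j)
    (x : Fin G → ℕ)
    (hxJ : ∑ i, x i = J)
    (hweight : ∑ i, z i * ((x i : ℕ) : ℝ) ≤ Z)
    (hvalue : ∑ i, c i * ((x i : ℕ) : ℝ) ≥ L + ∑ i, d i) :
    ∃ V : Fin G → Fin J → ℕ,
      (∀ i j, V i j = 0 ∨ V i j = 1) ∧
      (∀ j, ∑ i, V i j = 1) ∧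
      (∀ i, ∑ j, V i j = x i) ∧
      (∑ i, z i * ((∑ j, V i j : ℕ) : ℝ) ≤ Z) ∧
      (∀ i j, V i j = 1 → c i ≤ b j) ∧
      (∑ i, (c i * ((∑ j, V i j : ℕ) : ℝ) - d i) ≥ L) := by
  obtain ⟨f, hf⟩ := exists_fun_card_fiber_eq x (by rw [hxJ, Fintype.card_fin])
  have hrow (i : Fin G) : ∑ j, incidenceMatrix f i j = x i := by
    rw [incidenceMatrix.sum_row, hf]
  refine ⟨incidenceMatrix f, incidenceMatrix.eq_zero_or_eq_one f, incidenceMatrix.sum_col f,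
    hrow, ?_, fun i j _ => hbudget i j, ?_⟩
  · simpa only [hrow] using hweight
  · rw [sum_sub_distrib]
    simp only [hrow]
    linarith
end

section
/- (Optimality of the best-affordable allocation when the storage constraint is slack, Section V-A.) Assume the costs c : Fin G → ℝ are strictly increasing and every budget satisfies b j ≥ c 0. For each user j let k j ∈ Fin G be the largest index i with c i ≤ b j. Assume ∑_{j} z (k j) ≤ Z. Define V* : Fin G → Fin J → ℕ by V* i j = 1 if i = k j and V* i j = 0 otherwise. Then V* is a feasible allocation, and for every feasible allocation V, the profit satisfies ∑_{i} (c i * (∑_{j} V i j) − d i) ≤ ∑_{i} (c i * (∑_{j} V* i j) − d i); i.e., V* is an optimal solution of the DAP. -/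
/-! The profit is `∑ i, c i * (number of users served category i) - ∑ i, d i`, and the
first term regroups by users as `∑ j, c (category of user j)`. A feasible allocation serves
each user exactly one affordable category, which by monotonicity of `c` costs at most
`c (k j)`; so `V*` maximizes every summand. The slackness hypothesis is exactly the size
constraint for `V*`. -/

open Finset

section ColumnSums

variable {ι κ : Type*} [Fintype ι] [Fintype κ]

theorem Nat.exists_eq_pi_single_of_sum_eq_one [DecidableEq ι] {f : ι → ℕ}
    (hf : ∑ i, f i = 1) : ∃ a, f = Pi.single a 1 := by
  obtain ⟨a, ha⟩ := (Finsupp.sum_eq_one_iff (Finsupp.equivFunOnFinite.symm f)).mp <| by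
    rwa [Finsupp.sum_fintype _ _ fun _ => rfl]
  exact ⟨a, by simpa using congrArg Finsupp.equivFunOnFinite ha⟩

theorem exists_sum_mul_eq_of_sum_eq_one {R : Type*} [NonAssocSemiring R] {f : ι → ℕ}
    (hf : ∑ i, f i = 1) (w : ι → R) : ∃ a, f a = 1 ∧ ∑ i, w i * (f i : R) = w a := by
  classical
  obtain ⟨a, rfl⟩ := Nat.exists_eq_pi_single_of_sum_eq_one hf
  exact ⟨a, by simp, by simp [Pi.single_apply]⟩

theorem sum_mul_cast_sum_eq_sum_sum {R : Type*} [NonAssocSemiring R] (w : ι → R)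
    (V : ι → κ → ℕ) :
    ∑ i, w i * ((∑ j, V i j : ℕ) : R) = ∑ j, ∑ i, w i * (V i j : R) := by
  simp only [Nat.cast_sum, mul_sum]
  exact sum_comm

end ColumnSums

theorem best_affordable_allocation_optimal_general
    (G J : ℕ)
    (c z d : Fin G → ℝ) (Z : ℝ) (b : Fin J → ℝ)
    (hc_mono : StrictMono c)
    (k : Fin J → Fin G)
    (hk_afford : ∀ j, c (k j) ≤ b j)
    (hk_max : ∀ (j : Fin J) (i : Fin G), c i ≤ b j → i ≤ k j)
    (hslack : ∑ j, z (k j) ≤ Z)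
    (Vstar : Fin G → Fin J → ℕ)
    (hVstar : ∀ i j, Vstar i j = if i = k j then 1 else 0) :
    ((∀ i j, Vstar i j = 0 ∨ Vstar i j = 1) ∧
     (∀ j, ∑ i, Vstar i j = 1) ∧
     (∀ i j, Vstar i j = 1 → c i ≤ b j) ∧
     (∑ i, z i * ((∑ j, Vstar i j : ℕ) : ℝ) ≤ Z)) ∧
    (∀ V : Fin G → Fin J → ℕ,
      (∀ i j, V i j = 0 ∨ V i j = 1) →
      (∀ j, ∑ i, V i j = 1) →
      (∀ i j, V i j = 1 → c i ≤ b j) →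
      (∑ i, z i * ((∑ j, V i j : ℕ) : ℝ) ≤ Z) →
      ∑ i, (c i * ((∑ j, V i j : ℕ) : ℝ) - d i) ≤
        ∑ i, (c i * ((∑ j, Vstar i j : ℕ) : ℝ) - d i)) := by
  obtain rfl : Vstar = fun i j => if i = k j then 1 else 0 := funext₂ hVstar
  have hstar (w : Fin G → ℝ) :
      ∑ i, w i * ((∑ j, (if i = k j then 1 else 0 : ℕ) : ℕ) : ℝ) = ∑ j, w (k j) := by
    rw [sum_mul_cast_sum_eq_sum_sum]
    simp
  refine ⟨⟨fun i j => by dsimp only; split_ifs <;> simp, fun j => by simp, fun i j h => ?_,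
    hstar z ▸ hslack⟩, fun V _ hsum haff _ => ?_⟩
  · obtain rfl : i = k j := by simpa using h
    exact hk_afford j
  · rw [sum_sub_distrib, sum_sub_distrib, hstar c, sum_mul_cast_sum_eq_sum_sum]
    gcongr with j
    obtain ⟨i, hi, hcol⟩ := exists_sum_mul_eq_of_sum_eq_one (hsum j) c
    rw [hcol]
    exact hc_mono.monotone (hk_max j i (haff i j hi))

/-- Optimality of the best-affordable allocation when the storage constraint
is slack (Section V-A): if each user `j` gets the largest category `k j` it can
afford and the total size `∑ j, z (k j)` fits within `Z`, then the resulting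
0/1 allocation `V*` is feasible and maximizes profit among all feasible
allocations. -/
theorem best_affordable_allocation_optimal
    (G J : ℕ) (hG : 0 < G)
    (c z d : Fin G → ℝ) (Z : ℝ) (b : Fin J → ℝ)
    (hc_mono : StrictMono c)
    (hb : ∀ j, c ⟨0, hG⟩ ≤ b j)
    (k : Fin J → Fin G)
    (hk_afford : ∀ j, c (k j) ≤ b j)
    (hk_max : ∀ (j : Fin J) (i : Fin G), c i ≤ b j → i ≤ k j)
    (hslack : ∑ j, z (k j) ≤ Z)
    (Vstar : Fin G → Fin J → ℕ)
    (hVstar : ∀ i j, Vstar i j = if i = k j then 1 else 0) :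
    ((∀ i j, Vstar i j = 0 ∨ Vstar i j = 1) ∧
     (∀ j, ∑ i, Vstar i j = 1) ∧
     (∀ i j, Vstar i j = 1 → c i ≤ b j) ∧
     (∑ i, z i * ((∑ j, Vstar i j : ℕ) : ℝ) ≤ Z)) ∧
    (∀ V : Fin G → Fin J → ℕ,
      (∀ i j, V i j = 0 ∨ V i j = 1) →
      (∀ j, ∑ i, V i j = 1) →
      (∀ i j, V i j = 1 → c i ≤ b j) →
      (∑ i, z i * ((∑ j, V i j : ℕ) : ℝ) ≤ Z) →
      ∑ i, (c i * ((∑ j, V i j : ℕ) : ℝ) - d i) ≤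
        ∑ i, (c i * ((∑ j, Vstar i j : ℕ) : ℝ) - d i)) :=
  best_affordable_allocation_optimal_general G J c z d Z b hc_mono k hk_afford hk_max hslack Vstar
    hVstar
end
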